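/- Let M = {x ∈ ℝ⁴ : x² + x⁴ > 0} and let C ∈ ℝ be a constant. Define the antisymmetric tensor field F on M by F₁₂ = F₁₄ = C·x¹/(x²+x⁴), F₁₃ = 0, F₂₃ = −F₃₄ = −C·x³/(x²+x⁴), F₂₄ = C (and F_{ji} = −F_{ij}). Then F is closed (∂_iF_{jk} + ∂_jF_{ki} + ∂_kF_{ij} = 0 for all i,j,k) and satisfies the invariance conditions L_ξF = 0 on M for the five vector fields ξ = e₁₂ − e₁₄ = (−x²−x⁴, x¹, 0, −x¹), ξ = e₂₃ + e₃₄ = (0, −x³, x²+x⁴, x³), ξ = e₁₃ = (x³, 0, −x¹, 0), ξ = e₂₄ = (0, x⁴, 0, x²) and ξ = e₂ − e₄ = (0,1,0,−1); hence the Maxwell space (M, F) admits the five-dimensional group G₍₅,₉₎ generated by these fields. (This is the class C₍₅,₉₎ of the appendix.) -/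

import Mathlib

open Real

/-- Partial derivative of a scalar function on ℝ⁴ in the j-th coordinate direction. -/
noncomputable def pd (j : Fin 4) (f : (Fin 4 → ℝ) → ℝ) (x : Fin 4 → ℝ) : ℝ :=
  fderiv ℝ f x (Pi.single j 1)

/-- The (i,j) component of the Lie derivative of the 2-tensor field F along
the vector field ξ at x: Σ_k ξ^k ∂_k F_ij + Σ_k F_kj ∂_i ξ^k + Σ_k F_ik ∂_j ξ^k. -/
noncomputable def lieTen (ξ : (Fin 4 → ℝ) → Fin 4 → ℝ)
    (F : (Fin 4 → ℝ) → Fin 4 → Fin 4 → ℝ) (x : Fin 4 → ℝ) (i j : Fin 4) : ℝ :=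
  (∑ k : Fin 4, ξ x k * pd k (fun y => F y i j) x)
    + (∑ k : Fin 4, F x k j * pd i (fun y => ξ y k) x)
    + ∑ k : Fin 4, F x i k * pd j (fun y => ξ y k) x

/-- Invariance condition L_ξ F = 0 on a set M for a 2-tensor field F. -/
def TenInvariantOn (ξ : (Fin 4 → ℝ) → Fin 4 → ℝ)
    (F : (Fin 4 → ℝ) → Fin 4 → Fin 4 → ℝ) (M : Set (Fin 4 → ℝ)) : Prop :=
  ∀ x ∈ M, ∀ i j, lieTen ξ F x i j = 0

/-- The 2-form F is closed on M: ∂_i F_jk + ∂_j F_ki + ∂_k F_ij = 0. -/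
def ClosedOn (F : (Fin 4 → ℝ) → Fin 4 → Fin 4 → ℝ) (M : Set (Fin 4 → ℝ)) : Prop :=
  ∀ x ∈ M, ∀ i j k : Fin 4,
    pd i (fun y => F y j k) x + pd j (fun y => F y k i) x + pd k (fun y => F y i j) x = 0

def e1 : (Fin 4 → ℝ) → Fin 4 → ℝ := fun _ => ![1, 0, 0, 0]
def e3 : (Fin 4 → ℝ) → Fin 4 → ℝ := fun _ => ![0, 0, 1, 0]
def e13 : (Fin 4 → ℝ) → Fin 4 → ℝ := fun x => ![x 2, 0, -x 0, 0]
def e24 : (Fin 4 → ℝ) → Fin 4 → ℝ := fun x => ![0, x 3, 0, x 1]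

/-- The domain {x : x² + x⁴ > 0}. -/
def Mpos : Set (Fin 4 → ℝ) := {x | 0 < x 1 + x 3}

/-- The Maxwell tensor of class C_{5,9}: F₁₂ = F₁₄ = Cx¹/(x²+x⁴), F₁₃ = 0,
F₂₃ = −F₃₄ = −Cx³/(x²+x⁴), F₂₄ = C, and F_{ji} = −F_{ij}. -/
noncomputable def F59 (C : ℝ) (x : Fin 4 → ℝ) : Fin 4 → Fin 4 → ℝ :=
  ![![0, C * x 0 / (x 1 + x 3), 0, C * x 0 / (x 1 + x 3)],
    ![-(C * x 0 / (x 1 + x 3)), 0, -(C * x 2 / (x 1 + x 3)), C],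
    ![0, C * x 2 / (x 1 + x 3), 0, C * x 2 / (x 1 + x 3)],
    ![-(C * x 0 / (x 1 + x 3)), -C, -(C * x 2 / (x 1 + x 3)), 0]]

namespace C59aux

lemma pd_of {f : (Fin 4 → ℝ) → ℝ} {L : (Fin 4 → ℝ) →L[ℝ] ℝ} {x} (h : HasFDerivAt f L x) (k : Fin 4) :
    pd k f x = L (Pi.single k 1) := by rw [pd, h.fderiv]

lemma hc (i : Fin 4) (x : Fin 4 → ℝ) :
    HasFDerivAt (𝕜 := ℝ) (fun y : Fin 4 → ℝ => y i)
      (ContinuousLinearMap.proj (R := ℝ) (φ := fun _ : Fin 4 => ℝ) i) x :=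
  (ContinuousLinearMap.proj (R := ℝ) (φ := fun _ : Fin 4 => ℝ) i).hasFDerivAt

lemma hs (x : Fin 4 → ℝ) :
    HasFDerivAt (𝕜 := ℝ) (fun y : Fin 4 → ℝ => y 1 + y 3)
      (ContinuousLinearMap.proj (R := ℝ) (φ := fun _ : Fin 4 => ℝ) 1 + ContinuousLinearMap.proj 3) x :=
  (hc 1 x).add (hc 3 x)

lemma hinv (x : Fin 4 → ℝ) (hx : x 1 + x 3 ≠ 0) :
    HasFDerivAt (𝕜 := ℝ) (fun y : Fin 4 → ℝ => (y 1 + y 3)⁻¹)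
      (((-ContinuousLinearMap.mulLeftRight ℝ ℝ (x 1 + x 3)⁻¹ (x 1 + x 3)⁻¹).comp
        (ContinuousLinearMap.proj (R := ℝ) (φ := fun _ : Fin 4 => ℝ) 1 + ContinuousLinearMap.proj 3))) x :=
  HasFDerivAt.comp (𝕜 := ℝ) x (hasFDerivAt_inv' (𝕜 := ℝ) hx) (hs x)

lemma hu (C : ℝ) (i : Fin 4) (x : Fin 4 → ℝ) (hx : x 1 + x 3 ≠ 0) :
    HasFDerivAt (𝕜 := ℝ) (fun y : Fin 4 → ℝ => C * y i * (y 1 + y 3)⁻¹)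
      ((C * x i) • (((-ContinuousLinearMap.mulLeftRight ℝ ℝ (x 1 + x 3)⁻¹ (x 1 + x 3)⁻¹).comp
        (ContinuousLinearMap.proj (R := ℝ) (φ := fun _ : Fin 4 => ℝ) 1 + ContinuousLinearMap.proj 3)))
        + (x 1 + x 3)⁻¹ • (C • ContinuousLinearMap.proj i)) x :=
  ((hc i x).const_mul C).mul (hinv x hx)

lemma pd_u (C : ℝ) (i : Fin 4) (x : Fin 4 → ℝ) (hx : x 1 + x 3 ≠ 0) (k : Fin 4) :
    pd k (fun y => C * y i / (y 1 + y 3)) x =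
      (C * (Pi.single k 1 : Fin 4 → ℝ) i * (x 1 + x 3)
        - C * x i * ((Pi.single k 1 : Fin 4 → ℝ) 1 + (Pi.single k 1 : Fin 4 → ℝ) 3)) / (x 1 + x 3)^2 := by
  have e : (fun y : Fin 4 → ℝ => C * y i / (y 1 + y 3)) = fun y => C * y i * (y 1 + y 3)⁻¹ := by
    funext y; rw [div_eq_mul_inv]
  rw [e, pd_of (hu C i x hx)]
  simp only [ContinuousLinearMap.add_apply, ContinuousLinearMap.smul_apply,
    ContinuousLinearMap.comp_apply, ContinuousLinearMap.neg_apply,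
    ContinuousLinearMap.mulLeftRight_apply, ContinuousLinearMap.proj_apply, smul_eq_mul]
  field_simp
  ring

lemma pd_un (C : ℝ) (i : Fin 4) (x : Fin 4 → ℝ) (hx : x 1 + x 3 ≠ 0) (k : Fin 4) :
    pd k (fun y => -(C * y i / (y 1 + y 3))) x =
      -((C * (Pi.single k 1 : Fin 4 → ℝ) i * (x 1 + x 3)
        - C * x i * ((Pi.single k 1 : Fin 4 → ℝ) 1 + (Pi.single k 1 : Fin 4 → ℝ) 3)) / (x 1 + x 3)^2) := by
  have e : (fun y : Fin 4 → ℝ => -(C * y i / (y 1 + y 3))) = fun y => -(C * y i * (y 1 + y 3)⁻¹) := by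
    funext y; rw [div_eq_mul_inv]
  rw [e, pd_of (f := fun y => -(C * y i * (y 1 + y 3)⁻¹)) (hu C i x hx).neg, ContinuousLinearMap.neg_apply, ← pd_of (hu C i x hx), neg_inj]
  have e2 : (fun y : Fin 4 → ℝ => C * y i * (y 1 + y 3)⁻¹) = fun y => C * y i / (y 1 + y 3) := by
    funext y; rw [div_eq_mul_inv]
  rw [e2, pd_u C i x hx]

lemma pd_coord (i : Fin 4) (x : Fin 4 → ℝ) (k : Fin 4) :
    pd k (fun y => y i) x = (Pi.single k 1 : Fin 4 → ℝ) i := by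
  rw [pd_of (hc i x)]; rfl

lemma pd_coord_neg (i : Fin 4) (x : Fin 4 → ℝ) (k : Fin 4) :
    pd k (fun y => -y i) x = -(Pi.single k 1 : Fin 4 → ℝ) i := by
  rw [pd_of (f := fun y => -y i) (hc i x).neg]; rfl

lemma pd_sum13 (x : Fin 4 → ℝ) (k : Fin 4) :
    pd k (fun y => y 1 + y 3) x = (Pi.single k 1 : Fin 4 → ℝ) 1 + (Pi.single k 1 : Fin 4 → ℝ) 3 := by
  rw [pd_of (hs x)]; rfl

lemma pd_nsum13 (x : Fin 4 → ℝ) (k : Fin 4) :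
    pd k (fun y => -y 1 - y 3) x = -(Pi.single k 1 : Fin 4 → ℝ) 1 - (Pi.single k 1 : Fin 4 → ℝ) 3 := by
  rw [pd_of (f := fun y => -y 1 - y 3) ((hc 1 x).neg.sub (hc 3 x))]; rfl

lemma pd_const (c : ℝ) (x : Fin 4 → ℝ) (k : Fin 4) : pd k (fun _ => c) x = 0 := by
  simp [pd]

end C59aux


namespace C59aux

set_option maxHeartbeats 1000000 in
lemma antisym (C : ℝ) : ∀ x i j, F59 C x i j = -F59 C x j i := by
  intro x i j
  fin_cases i <;> fin_cases j <;> simp [F59]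

set_option maxHeartbeats 1000000 in
lemma closed (C : ℝ) : ClosedOn (F59 C) Mpos := by
  intro x hx0 i j k
  have hx : x 1 + x 3 ≠ 0 := ne_of_gt hx0
  fin_cases i <;> fin_cases j <;> fin_cases k <;>
    simp [F59, pd_u C 0 x hx, pd_u C 2 x hx, pd_un C 0 x hx,
      pd_un C 2 x hx, pd_const, Pi.single_apply] <;>
    field_simp <;> ring

set_option maxHeartbeats 1000000 in
lemma inv1 (C : ℝ) :
    TenInvariantOn (fun x => ![-x 1 - x 3, x 0, 0, -x 0]) (F59 C) Mpos := by
  intro x hx0 i j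
  have hx : x 1 + x 3 ≠ 0 := ne_of_gt hx0
  fin_cases i <;> fin_cases j <;>
    simp [lieTen, Fin.sum_univ_four, F59, pd_u C 0 x hx, pd_u C 2 x hx, pd_un C 0 x hx,
      pd_un C 2 x hx, pd_coord, pd_coord_neg, pd_sum13, pd_nsum13, pd_const,
      Pi.single_apply] <;>
    field_simp <;> ring

set_option maxHeartbeats 1000000 in
lemma inv2 (C : ℝ) :
    TenInvariantOn (fun x => ![0, -x 2, x 1 + x 3, x 2]) (F59 C) Mpos := by
  intro x hx0 i j
  have hx : x 1 + x 3 ≠ 0 := ne_of_gt hx0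
  fin_cases i <;> fin_cases j <;>
    simp [lieTen, Fin.sum_univ_four, F59, pd_u C 0 x hx, pd_u C 2 x hx, pd_un C 0 x hx,
      pd_un C 2 x hx, pd_coord, pd_coord_neg, pd_sum13, pd_nsum13, pd_const,
      Pi.single_apply] <;>
    field_simp <;> ring

set_option maxHeartbeats 1000000 in
lemma inv3 (C : ℝ) : TenInvariantOn e13 (F59 C) Mpos := by
  intro x hx0 i j
  have hx : x 1 + x 3 ≠ 0 := ne_of_gt hx0
  fin_cases i <;> fin_cases j <;>
    simp [lieTen, Fin.sum_univ_four, F59, e13, pd_u C 0 x hx, pd_u C 2 x hx, pd_un C 0 x hx,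
      pd_un C 2 x hx, pd_coord, pd_coord_neg, pd_sum13, pd_nsum13, pd_const,
      Pi.single_apply] <;>
    field_simp <;> ring

set_option maxHeartbeats 1000000 in
lemma inv4 (C : ℝ) : TenInvariantOn e24 (F59 C) Mpos := by
  intro x hx0 i j
  have hx : x 1 + x 3 ≠ 0 := ne_of_gt hx0
  fin_cases i <;> fin_cases j <;>
    simp [lieTen, Fin.sum_univ_four, F59, e24, pd_u C 0 x hx, pd_u C 2 x hx, pd_un C 0 x hx,
      pd_un C 2 x hx, pd_coord, pd_coord_neg, pd_sum13, pd_nsum13, pd_const,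
      Pi.single_apply] <;>
    field_simp <;> ring

set_option maxHeartbeats 1000000 in
lemma inv5 (C : ℝ) : TenInvariantOn (fun _ => ![0, 1, 0, -1]) (F59 C) Mpos := by
  intro x hx0 i j
  have hx : x 1 + x 3 ≠ 0 := ne_of_gt hx0
  fin_cases i <;> fin_cases j <;>
    simp [lieTen, Fin.sum_univ_four, F59, pd_u C 0 x hx, pd_u C 2 x hx, pd_un C 0 x hx,
      pd_un C 2 x hx, pd_coord, pd_coord_neg, pd_sum13, pd_nsum13, pd_const,
      Pi.single_apply] <;>
    field_simp <;> ring

end C59aux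

/-- Class C_{5,9}: the tensor F59 is antisymmetric, closed, and invariant under
e₁₂−e₁₄, e₂₃+e₃₄, e₁₃, e₂₄ and e₂−e₄ on {x² + x⁴ > 0}. -/
theorem class_C59 (C : ℝ) :
    (∀ x i j, F59 C x i j = -F59 C x j i) ∧
    ClosedOn (F59 C) Mpos ∧
    TenInvariantOn (fun x => ![-x 1 - x 3, x 0, 0, -x 0]) (F59 C) Mpos ∧
    TenInvariantOn (fun x => ![0, -x 2, x 1 + x 3, x 2]) (F59 C) Mpos ∧
    TenInvariantOn e13 (F59 C) Mpos ∧
    TenInvariantOn e24 (F59 C) Mpos ∧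
    TenInvariantOn (fun _ => ![0, 1, 0, -1]) (F59 C) Mpos :=
  ⟨C59aux.antisym C, C59aux.closed C, C59aux.inv1 C, C59aux.inv2 C,
   C59aux.inv3 C, C59aux.inv4 C, C59aux.inv5 C⟩
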